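/- Let h : ℝ^n → ℝ be affine with h(b₁)·h(b₂) > 0, and let ω : [s₁, s₂] → ℝ^n (s₁ < s₂) be a differentiable function with h(ω(t)) = 0 for all t ∈ [s₁, s₂], and such that for almost every t, ω'(t) = λ(t)(b₁ − ω(t)) + (1 − λ(t))(b₂ − ω(t)) for some λ(t) ∈ [0,1]. Then these hypotheses are contradictory, i.e., no such function ω exists. -/
import Mathlib


open scoped RealInnerProductSpace
open MeasureTheory

/-- no differentiable function can remain on a non-attracting
discontinuity hyperplane over a nontrivial time interval while its derivative
is a.e. a convex combination of b₁ − ω(t) and b₂ − ω(t): the hypotheses are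
contradictory. -/
theorem stmt18 {n : ℕ} (v : EuclideanSpace ℝ (Fin n)) (c : ℝ)
    (h : EuclideanSpace ℝ (Fin n) → ℝ)
    (hh : ∀ ω, h ω = ⟪v, ω⟫ + c)
    (b₁ b₂ : EuclideanSpace ℝ (Fin n)) (hsign : h b₁ * h b₂ > 0)
    (s₁ s₂ : ℝ) (hs : s₁ < s₂)
    (ω : ℝ → EuclideanSpace ℝ (Fin n)) (ω' : ℝ → EuclideanSpace ℝ (Fin n))
    (hderiv : ∀ t ∈ Set.Icc s₁ s₂, HasDerivAt ω (ω' t) t)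
    (hon : ∀ t ∈ Set.Icc s₁ s₂, h (ω t) = 0)
    (hincl : ∀ᵐ t ∂(MeasureTheory.volume), t ∈ Set.Ioo s₁ s₂ →
      ∃ lam : ℝ, lam ∈ Set.Icc (0:ℝ) 1 ∧
        ω' t = lam • (b₁ - ω t) + (1 - lam) • (b₂ - ω t)) :
    False := by
  -- find a point t ∈ Ioo where the inclusion holds
  obtain ⟨t, htI, lam, hlam, hode⟩ :
      ∃ t ∈ Set.Ioo s₁ s₂, ∃ lam : ℝ, lam ∈ Set.Icc (0:ℝ) 1 ∧
        ω' t = lam • (b₁ - ω t) + (1 - lam) • (b₂ - ω t) := by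
    by_contra hcon
    push_neg at hcon
    have hae : ∀ᵐ t ∂(volume : Measure ℝ), t ∉ Set.Ioo s₁ s₂ := by
      filter_upwards [hincl] with t ht hmem
      obtain ⟨lam, h1, h2⟩ := ht hmem
      exact hcon t hmem lam h1 h2
    have h0 : (volume : Measure ℝ) (Set.Ioo s₁ s₂) = 0 := by
      have := measure_eq_zero_iff_ae_notMem.2 hae
      exact this
    rw [Real.volume_Ioo] at h0
    simp [sub_eq_zero, hs.ne'] at h0
    linarith [ENNReal.ofReal_pos.2 (sub_pos.2 hs), h0]
  have htIcc : t ∈ Set.Icc s₁ s₂ := Set.Ioo_subset_Icc_self htI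
  -- derivative of t ↦ ⟪v, ω t⟫ + c
  have hg : HasDerivAt (fun t => (⟪v, ω t⟫ : ℝ) + c) ⟪v, ω' t⟫ t := by
    have := ((innerSL ℝ v).hasFDerivAt.comp_hasDerivAt t (hderiv t htIcc))
    simpa using this.add_const c
  -- the function h ∘ ω is 0 on a neighborhood of t
  have hnhds : Set.Icc s₁ s₂ ∈ nhds t := Icc_mem_nhds htI.1 htI.2
  have hzero : (fun t => (⟪v, ω t⟫ : ℝ) + c) =ᶠ[nhds t] (fun _ => (0:ℝ)) := by
    filter_upwards [hnhds] with s hsmem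
    rw [← hh]; exact hon s hsmem
  have hg0 : HasDerivAt (fun t => (⟪v, ω t⟫ : ℝ) + c) 0 t :=
    (hasDerivAt_const t (0:ℝ)).congr_of_eventuallyEq hzero
  have hder0 : (⟪v, ω' t⟫ : ℝ) = 0 := hg.unique hg0
  -- compute the inner product of v with the ODE right-hand side
  have hωt : (⟪v, ω t⟫ : ℝ) = -c := by
    have := hon t htIcc
    rw [hh] at this; linarith
  have hcomb : lam * h b₁ + (1 - lam) * h b₂ = 0 := by
    rw [hode] at hder0
    rw [inner_add_right, real_inner_smul_right, real_inner_smul_right,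
      inner_sub_right, inner_sub_right, hωt] at hder0
    rw [hh b₁, hh b₂]
    linarith
  obtain ⟨hl0, hl1⟩ := hlam
  have key : (lam * h b₁ + (1 - lam) * h b₂) * (h b₁ + h b₂) = 0 := by
    rw [hcomb]; ring
  nlinarith [key, mul_nonneg hl0 (sq_nonneg (h b₁)),
    mul_nonneg (sub_nonneg.2 hl1) (sq_nonneg (h b₂)), hsign]
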